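/- Let M be a smooth manifold and let ω¹, ω², τ be smooth 1-forms on M satisfying the structure equations dω¹ = ω² ∧ τ, dω² = −ω¹ ∧ τ, and dτ = K·(ω¹ ∧ ω²) for a smooth function K. Let τ₁ = E₁₃−E₃₁, τ₂ = E₂₃−E₃₂, τ₃ = E₁₂−E₂₁ be 3×3 skew-symmetric matrices (E_{ij} the matrix unit), and let A = τ₁ω¹ + τ₂ω² + τ₃τ, i.e. the so(3)-valued 1-form with matrix entries [[0, τ, ω¹],[−τ, 0, ω²],[−ω¹, −ω², 0]]. Then the curvature Ω of A satisfies Ω(X,Y) = (K−1)·(ω¹∧ω²)(X,Y)·τ₃ for all vector fields X, Y. Consequently, if at every point p of M there exist vector fields X, Y with (ω¹∧ω²)(X,Y)(p) ≠ 0, then Ω vanishes identically if and only if K ≡ 1. -/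

import Mathlib

/-!
Write `A = ω¹ τ₁ + ω² τ₂ + τ τ₃`. Since the `τᵢ` have constant integer entries, differentiating `A`
entrywise only uses additivity of the vector fields, and
`Ω = Σ dωⁱ τᵢ + Σ_{i<j} (ωⁱ ∧ ωʲ) [τᵢ, τⱼ]`. With `[τ₁, τ₂] = -τ₃`, `[τ₂, τ₃] = -τ₁`,
`[τ₃, τ₁] = -τ₂`, the structure equations cancel the `τ₁`- and `τ₂`-components and leave
`(K - 1) ω¹ ∧ ω²` on `τ₃`.
-/

theorem lie_smul_add_smul_add_smul {R A : Type*} [CommRing R] [Ring A] [Algebra R A]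
    (a b c a' b' c' : R) (x y z : A) :
    ⁅a • x + b • y + c • z, a' • x + b' • y + c' • z⁆ =
      (a * b' - a' * b) • ⁅x, y⁆ + (b * c' - b' * c) • ⁅y, z⁆ + (c * a' - c' * a) • ⁅z, x⁆ := by
  simp only [Ring.lie_def, add_mul, mul_add, smul_mul_smul_comm]
  module

theorem Pi.forall_mul_eq_zero_iff {M R ι κ : Type*} [MulZeroClass R] [NoZeroDivisors R]
    {w : ι → κ → M → R} (hw : ∀ p, ∃ i j, w i j p ≠ 0) (c : M → R) :
    (∀ i j, c * w i j = 0) ↔ c = 0 := by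
  refine ⟨fun h ↦ funext fun p ↦ ?_, fun h i j ↦ by rw [h, zero_mul]⟩
  obtain ⟨i, j, hp⟩ := hw p
  exact (mul_eq_zero.mp (congr_fun (h i j) p)).resolve_right hp

namespace Matrix

variable {n R : Type*} [Ring R]

theorem map_smul_map_intCast {m : Type*} {φ : R → R} (hφ : ∀ a b, φ (a + b) = φ a + φ b)
    (f : R) (s : Matrix m n ℤ) :
    (f • s.map (Int.cast : ℤ → R)).map φ = φ f • s.map (Int.cast : ℤ → R) := by
  ext i j
  simp only [map_apply, smul_apply, smul_eq_mul, ← zsmul_eq_mul']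
  exact map_zsmul (AddMonoidHom.mk' φ hφ) (s i j) f

theorem map_intCast_lie [Fintype n] [DecidableEq n] (a b : Matrix n n ℤ) :
    ⁅a, b⁆.map (Int.cast : ℤ → R) = ⁅a.map (Int.cast : ℤ → R), b.map Int.cast⁆ := by
  rw [Ring.lie_def, Ring.lie_def, Matrix.map_sub _ Int.cast_sub]
  exact congr_arg₂ _ (Matrix.map_mul (f := Int.castRingHom R))
    (Matrix.map_mul (f := Int.castRingHom R))

end Matrix

def so3Gen₁ : Matrix (Fin 3) (Fin 3) ℤ := !![0, 0, 1; 0, 0, 0; -1, 0, 0]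

def so3Gen₂ : Matrix (Fin 3) (Fin 3) ℤ := !![0, 0, 0; 0, 0, 1; 0, -1, 0]

def so3Gen₃ : Matrix (Fin 3) (Fin 3) ℤ := !![0, 1, 0; -1, 0, 0; 0, 0, 0]

theorem lie_so3Gen₁_so3Gen₂ : ⁅so3Gen₁, so3Gen₂⁆ = -so3Gen₃ := by decide

theorem lie_so3Gen₂_so3Gen₃ : ⁅so3Gen₂, so3Gen₃⁆ = -so3Gen₁ := by decide

theorem lie_so3Gen₃_so3Gen₁ : ⁅so3Gen₃, so3Gen₁⁆ = -so3Gen₂ := by decide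

theorem smul_map_so3Gen₃_eq_zero_iff {R : Type*} [Ring R] (f : R) :
    f • so3Gen₃.map (Int.cast : ℤ → R) = 0 ↔ f = 0 :=
  ⟨fun h ↦ by simpa [so3Gen₃] using congr_fun₂ h 0 1, fun h ↦ by rw [h, zero_smul]⟩

namespace OneForm

variable {R V : Type*} [CommRing R] {D : V → R → R} {bracket : V → V → V}

def wedge (α β : V → R) (X Y : V) : R := α X * β Y - α Y * β X

def exteriorDeriv (D : V → R → R) (bracket : V → V → V) (α : V → R) (X Y : V) : R :=
  D X (α Y) - D Y (α X) - α (bracket X Y)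

def curvature {n : Type*} [Fintype n] (D : V → R → R) (bracket : V → V → V)
    (A : V → Matrix n n R) (X Y : V) : Matrix n n R :=
  (A Y).map (D X) - (A X).map (D Y) - A (bracket X Y) + (A X * A Y - A Y * A X)

theorem curvature_smul_add_smul_add_smul {n : Type*} [Fintype n] [DecidableEq n]
    (hD : ∀ X a b, D X (a + b) = D X a + D X b) (α β γ : V → R) (x y z : Matrix n n ℤ)
    (X Y : V) :
    curvature D bracket
        (fun X ↦ α X • x.map Int.cast + β X • y.map Int.cast + γ X • z.map Int.cast) X Y =
      exteriorDeriv D bracket α X Y • x.map Int.cast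
        + exteriorDeriv D bracket β X Y • y.map Int.cast
        + exteriorDeriv D bracket γ X Y • z.map Int.cast
        + wedge α β X Y • ⁅x, y⁆.map Int.cast + wedge β γ X Y • ⁅y, z⁆.map Int.cast
        + wedge γ α X Y • ⁅z, x⁆.map Int.cast := by
  simp only [curvature, ← Ring.lie_def, lie_smul_add_smul_add_smul, Matrix.map_intCast_lie,
    Matrix.map_add _ (hD _), Matrix.map_smul_map_intCast (hD _), exteriorDeriv, wedge]
  module

theorem curvature_so3 (hD : ∀ X a b, D X (a + b) = D X a + D X b) {ω₁ ω₂ τ : V → R} {K : R}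
    (h₁ : ∀ X Y, exteriorDeriv D bracket ω₁ X Y = wedge ω₂ τ X Y)
    (h₂ : ∀ X Y, exteriorDeriv D bracket ω₂ X Y = -wedge ω₁ τ X Y)
    (h₃ : ∀ X Y, exteriorDeriv D bracket τ X Y = K * wedge ω₁ ω₂ X Y) (X Y : V) :
    curvature D bracket (fun X ↦ ω₁ X • so3Gen₁.map Int.cast + ω₂ X • so3Gen₂.map Int.cast
        + τ X • so3Gen₃.map Int.cast) X Y =
      ((K - 1) * wedge ω₁ ω₂ X Y) • so3Gen₃.map Int.cast := by
  rw [curvature_smul_add_smul_add_smul hD, h₁, h₂, h₃, lie_so3Gen₁_so3Gen₂, lie_so3Gen₂_so3Gen₃,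
    lie_so3Gen₃_so3Gen₁]
  simp only [Matrix.map_neg (Int.cast : ℤ → R) Int.cast_neg, wedge]
  module

end OneForm

open OneForm in
theorem sasaki_so3_form_curvature_general
    (M : Type*)
    (V : Type*)
    (bracket : V → V → V)
    (D : V → (M → ℝ) → (M → ℝ))
    -- vector fields act on functions as derivations
    (hD_add : ∀ X a b, D X (a + b) = D X a + D X b)
    -- the 1-forms ω¹, ω², τ and the function K
    (ω1 ω2 τ : V → M → ℝ) (K : M → ℝ)
    -- the structure equations dω¹ = ω² ∧ τ, dω² = −ω¹ ∧ τ, dτ = K·(ω¹ ∧ ω²)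
    (hstr1 : ∀ X Y, D X (ω1 Y) - D Y (ω1 X) - ω1 (bracket X Y)
      = ω2 X * τ Y - ω2 Y * τ X)
    (hstr2 : ∀ X Y, D X (ω2 Y) - D Y (ω2 X) - ω2 (bracket X Y)
      = -(ω1 X * τ Y - ω1 Y * τ X))
    (hstr3 : ∀ X Y, D X (τ Y) - D Y (τ X) - τ (bracket X Y)
      = K * (ω1 X * ω2 Y - ω1 Y * ω2 X)) :
    -- the matrices τ₁ = E₁₃−E₃₁, τ₂ = E₂₃−E₃₂, τ₃ = E₁₂−E₂₁
    let s1 : Matrix (Fin 3) (Fin 3) (M → ℝ) := !![0,0,1; 0,0,0; -1,0,0]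
    let s2 : Matrix (Fin 3) (Fin 3) (M → ℝ) := !![0,0,0; 0,0,1; 0,-1,0]
    let s3 : Matrix (Fin 3) (Fin 3) (M → ℝ) := !![0,1,0; -1,0,0; 0,0,0]
    -- the matrix-valued 1-form A = τ₁ω¹ + τ₂ω² + τ₃τ
    let A : V → Matrix (Fin 3) (Fin 3) (M → ℝ) :=
      fun X => ω1 X • s1 + ω2 X • s2 + τ X • s3
    -- its curvature Ω(X,Y) = X(A(Y)) − Y(A(X)) − A([X,Y]) + [A(X),A(Y)]
    let Ω : V → V → Matrix (Fin 3) (Fin 3) (M → ℝ) :=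
      fun X Y => (A Y).map (D X) - (A X).map (D Y) - A (bracket X Y)
        + (A X * A Y - A Y * A X)
    -- the curvature identity Ω(X,Y) = (K−1)·(ω¹∧ω²)(X,Y)·τ₃ ...
    (∀ X Y, Ω X Y = ((K - 1) * (ω1 X * ω2 Y - ω1 Y * ω2 X)) • s3)
    -- ... and the consequence: if ω¹∧ω² is nowhere zero,
    -- then Ω ≡ 0 iff K ≡ 1
    ∧ ((∀ p : M, ∃ X Y, (ω1 X * ω2 Y - ω1 Y * ω2 X) p ≠ 0) →
        ((∀ X Y, Ω X Y = 0) ↔ ∀ p : M, K p = 1)) := by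
  intro s1 s2 s3 A Ω
  have h₁ : s1 = so3Gen₁.map Int.cast := by
    ext i j; fin_cases i <;> fin_cases j <;> simp [s1, so3Gen₁]
  have h₂ : s2 = so3Gen₂.map Int.cast := by
    ext i j; fin_cases i <;> fin_cases j <;> simp [s2, so3Gen₂]
  have h₃ : s3 = so3Gen₃.map Int.cast := by
    ext i j; fin_cases i <;> fin_cases j <;> simp [s3, so3Gen₃]
  have hΩ (X Y : V) : Ω X Y = ((K - 1) * wedge ω1 ω2 X Y) • s3 := by
    change curvature D bracket (fun X ↦ ω1 X • s1 + ω2 X • s2 + τ X • s3) X Y = _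
    rw [h₁, h₂, h₃]
    exact curvature_so3 hD_add hstr1 hstr2 hstr3 X Y
  refine ⟨hΩ, fun hw ↦ ?_⟩
  simp only [hΩ, h₃, smul_map_so3Gen₃_eq_zero_iff]
  rw [Pi.forall_mul_eq_zero_iff (w := wedge ω1 ω2) hw, sub_eq_zero, funext_iff]
  rfl

theorem sasaki_so3_form_curvature
    (M : Type*)
    (V : Type*) [AddCommGroup V] [Module (M → ℝ) V]
    (bracket : V → V → V)
    (D : V → (M → ℝ) → (M → ℝ))
    -- vector fields act on functions as derivations
    (hD_add : ∀ X a b, D X (a + b) = D X a + D X b)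
    (hD_mul : ∀ X a b, D X (a * b) = D X a * b + a * D X b)
    -- the 1-forms ω¹, ω², τ and the function K
    (ω1 ω2 τ : V → M → ℝ) (K : M → ℝ)
    -- the 1-forms are C^∞(M)-linear in the vector field
    (hω1_add : ∀ X Y, ω1 (X + Y) = ω1 X + ω1 Y)
    (hω1_smul : ∀ (u : M → ℝ) X, ω1 (u • X) = u * ω1 X)
    (hω2_add : ∀ X Y, ω2 (X + Y) = ω2 X + ω2 Y)
    (hω2_smul : ∀ (u : M → ℝ) X, ω2 (u • X) = u * ω2 X)
    (hτ_add : ∀ X Y, τ (X + Y) = τ X + τ Y)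
    (hτ_smul : ∀ (u : M → ℝ) X, τ (u • X) = u * τ X)
    -- the structure equations dω¹ = ω² ∧ τ, dω² = −ω¹ ∧ τ, dτ = K·(ω¹ ∧ ω²)
    (hstr1 : ∀ X Y, D X (ω1 Y) - D Y (ω1 X) - ω1 (bracket X Y)
      = ω2 X * τ Y - ω2 Y * τ X)
    (hstr2 : ∀ X Y, D X (ω2 Y) - D Y (ω2 X) - ω2 (bracket X Y)
      = -(ω1 X * τ Y - ω1 Y * τ X))
    (hstr3 : ∀ X Y, D X (τ Y) - D Y (τ X) - τ (bracket X Y)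
      = K * (ω1 X * ω2 Y - ω1 Y * ω2 X)) :
    -- the matrices τ₁ = E₁₃−E₃₁, τ₂ = E₂₃−E₃₂, τ₃ = E₁₂−E₂₁
    let s1 : Matrix (Fin 3) (Fin 3) (M → ℝ) := !![0,0,1; 0,0,0; -1,0,0]
    let s2 : Matrix (Fin 3) (Fin 3) (M → ℝ) := !![0,0,0; 0,0,1; 0,-1,0]
    let s3 : Matrix (Fin 3) (Fin 3) (M → ℝ) := !![0,1,0; -1,0,0; 0,0,0]
    -- the matrix-valued 1-form A = τ₁ω¹ + τ₂ω² + τ₃τ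
    let A : V → Matrix (Fin 3) (Fin 3) (M → ℝ) :=
      fun X => ω1 X • s1 + ω2 X • s2 + τ X • s3
    -- its curvature Ω(X,Y) = X(A(Y)) − Y(A(X)) − A([X,Y]) + [A(X),A(Y)]
    let Ω : V → V → Matrix (Fin 3) (Fin 3) (M → ℝ) :=
      fun X Y => (A Y).map (D X) - (A X).map (D Y) - A (bracket X Y)
        + (A X * A Y - A Y * A X)
    -- the curvature identity Ω(X,Y) = (K−1)·(ω¹∧ω²)(X,Y)·τ₃ ...
    (∀ X Y, Ω X Y = ((K - 1) * (ω1 X * ω2 Y - ω1 Y * ω2 X)) • s3)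
    -- ... and the consequence: if ω¹∧ω² is nowhere zero,
    -- then Ω ≡ 0 iff K ≡ 1
    ∧ ((∀ p : M, ∃ X Y, (ω1 X * ω2 Y - ω1 Y * ω2 X) p ≠ 0) →
        ((∀ X Y, Ω X Y = 0) ↔ ∀ p : M, K p = 1)) :=
  sasaki_so3_form_curvature_general M V bracket D hD_add ω1 ω2 τ K hstr1 hstr2 hstr3
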